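/- arXiv:1511.09092 — 6 statements merged into one kernel-verified Lean document; each statement's English description precedes it below -/
import Mathlib

section
/- If R is a binary relation on W satisfying R^n ⊆ R^m with n > m ≥ 0, then R is (n-1)-transitive, i.e., R* = ⋃_{0 ≤ i ≤ n-1} R^i. -/
/-- `relPow R i` is the `i`-fold composition of the relation `R`, with `relPow R 0` the identity. -/
def relPow {W : Type*} (R : W → W → Prop) : ℕ → W → W → Prop
  | 0 => Eq
  | (i+1) => fun x z => ∃ y, relPow R i x y ∧ R y z

lemma relPow_to_rtg {W : Type*} (R : W → W → Prop) :
    ∀ i x y, relPow R i x y → Relation.ReflTransGen R x y := by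
  intro i
  induction i with
  | zero => intro x y hxy; cases hxy; rfl
  | succ i ih =>
    rintro x z ⟨y, hxy, hyz⟩
    exact Relation.ReflTransGen.tail (ih x y hxy) hyz

theorem mn_frame_pretransitive {W : Type*} (R : W → W → Prop) (m n : ℕ)
    (hmn : n > m)
    (h : ∀ x y : W, relPow R n x y → relPow R m x y) :
    ∀ x y : W, Relation.ReflTransGen R x y ↔ ∃ i ≤ n - 1, relPow R i x y := by
  intro x y
  constructor
  · intro hxy
    induction hxy with
    | refl => exact ⟨0, Nat.zero_le _, rfl⟩
    | @tail b c hab hbc ih =>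
      obtain ⟨i, hi, hpow⟩ := ih
      have hpow' : relPow R (i + 1) x c := ⟨b, hpow, hbc⟩
      by_cases hle : i + 1 ≤ n - 1
      · exact ⟨i + 1, hle, hpow'⟩
      · have hn : i + 1 = n := by omega
        rw [hn] at hpow'
        exact ⟨m, by omega, h _ _ hpow'⟩
  · rintro ⟨i, _, hpow⟩
    exact relPow_to_rtg R i x y hpow
end

section
/- Let (W,R) be a frame with R* = W × W. Then for any k > 0 and any w, v ∈ W, the loop-length residue groups coincide: G_k(w) = G_k(v). -/
lemma relPow_trans {W : Type*} {R : W → W → Prop} {p q : ℕ} {x y z : W}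
    (h1 : relPow R p x y) (h2 : relPow R q y z) : relPow R (p + q) x z := by
  induction q generalizing z with
  | zero => cases h2; exact h1
  | succ q ih =>
    obtain ⟨u, hu, hz⟩ := h2
    exact ⟨u, ih hu, hz⟩

lemma relPow_of_rtg {W : Type*} {R : W → W → Prop} {x y : W}
    (h : Relation.ReflTransGen R x y) : ∃ n, relPow R n x y := by
  induction h with
  | refl => exact ⟨0, rfl⟩
  | tail _ hr ih =>
    obtain ⟨n, hn⟩ := ih
    exact ⟨n + 1, _, hn, hr⟩

lemma relPow_iter {W : Type*} {R : W → W → Prop} {c : ℕ} {x : W}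
    (h : relPow R c x x) : ∀ t, relPow R (t * c) x x := by
  intro t
  induction t with
  | zero => show relPow R (0 * c) x x; rw [Nat.zero_mul]; rfl
  | succ t ih =>
    have := relPow_trans ih h
    simpa [Nat.succ_mul] using this

lemma loop_subset {W : Type*} {R : W → W → Prop}
    (huniv : ∀ x y : W, Relation.ReflTransGen R x y)
    {k : ℕ} (hk : k > 0) (w v : W) :
    {r : ZMod k | ∃ n : ℕ, relPow R n w w ∧ (n : ZMod k) = r} ⊆
    {r : ZMod k | ∃ n : ℕ, relPow R n v v ∧ (n : ZMod k) = r} := by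
  rintro r ⟨m, hm, rfl⟩
  obtain ⟨a, ha⟩ := relPow_of_rtg (huniv v w)
  obtain ⟨b, hb⟩ := relPow_of_rtg (huniv w v)
  obtain ⟨k', rfl⟩ : ∃ k', k = k' + 1 := ⟨k - 1, by omega⟩
  -- loop at v: v →a→ w, loop m, w →b→ v, then k' round trips v→w→v
  have hround : relPow R (a + b) v v := relPow_trans ha hb
  have hloop : relPow R (a + m + b + k' * (a + b)) v v :=
    relPow_trans (relPow_trans (relPow_trans ha hm) hb) (relPow_iter hround k')
  refine ⟨a + m + b + k' * (a + b), hloop, ?_⟩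
  have hn : a + m + b + k' * (a + b) = m + (k' + 1) * (a + b) := by ring
  rw [hn]
  push_cast
  simp [ZMod.natCast_self]

theorem loop_residue_groups_coincide {W : Type*} (R : W → W → Prop)
    (huniv : ∀ x y : W, Relation.ReflTransGen R x y)
    (k : ℕ) (hk : k > 0) (w v : W) :
    {r : ZMod k | ∃ n : ℕ, relPow R n w w ∧ (n : ZMod k) = r} =
    {r : ZMod k | ∃ n : ℕ, relPow R n v v ∧ (n : ZMod k) = r} := by
  exact le_antisymm (loop_subset huniv hk w v) (loop_subset huniv hk v w)
end

section
/- Let F = (W,R) be a frame and ~ an equivalence relation with ~ ⊆ ~_R. Let (W̄, R̄) be the minimal filtration of F by ~ (points are ~-classes; ū R̄ v̄ iff ∃u' ~ u, v' ~ v with u' R v'). Then for all u, v ∈ W: u R* v iff ū (R̄)* v̄. -/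
/-- The equivalence `x ~_R y ⟺ x R* y ∧ y R* x`. -/
def simR {W : Type*} (R : W → W → Prop) (x y : W) : Prop :=
  Relation.ReflTransGen R x y ∧ Relation.ReflTransGen R y x

/-- The relation of the minimal filtration of `(W,R)` by the equivalence `E`:
`ū R̄ v̄` iff some representatives are `R`-related. -/
def filtRel {W : Type*} (R E : W → W → Prop) (U V : Quot E) : Prop :=
  ∃ u v : W, Quot.mk E u = U ∧ Quot.mk E v = V ∧ R u v

theorem filtration_reflTransGen {W : Type*} (R E : W → W → Prop)
    (hE : Equivalence E) (hsub : ∀ u v : W, E u v → simR R u v) :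
    ∀ u v : W, Relation.ReflTransGen R u v ↔
      Relation.ReflTransGen (filtRel R E) (Quot.mk E u) (Quot.mk E v) := by
  have hexact : ∀ a b : W, Quot.mk E a = Quot.mk E b → E a b := by
    intro a b h
    have hg := Quot.eqvGen_exact h
    clear h
    induction hg with
    | rel _ _ h => exact h
    | refl x => exact hE.refl x
    | symm _ _ _ ih => exact hE.symm ih
    | trans _ _ _ _ _ ih1 ih2 => exact hE.trans ih1 ih2
  intro u v
  constructor
  · intro h
    induction h with
    | refl => exact .refl
    | tail _ hab ih => exact ih.tail ⟨_, _, rfl, rfl, hab⟩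
  · intro h
    have key : ∀ U V, Relation.ReflTransGen (filtRel R E) U V →
        ∀ a b : W, Quot.mk E a = U → Quot.mk E b = V → Relation.ReflTransGen R a b := by
      intro U V h
      induction h with
      | refl =>
        intro a b ha hb
        exact (hsub a b (hexact a b (ha.trans hb.symm))).1
      | tail _ hstep ih =>
        intro a b ha hb
        obtain ⟨x, y, hx, hy, hxy⟩ := hstep
        have h1 := ih a x ha hx
        have h2 := (hsub y b (hexact y b (hy.trans hb.symm))).1
        exact (h1.tail hxy).trans h2
    exact key _ _ h u v rfl rfl
end

section
/- Let F = (W,R) be a frame and ~ an equivalence relation with ~ ⊆ ~_R, and let F̄ = (W̄, R̄) be the minimal filtration of F by ~. Then the skeletons of F and F̄ are isomorphic as partial orders, via the map sending a cluster C of F to the set of ~-classes contained in C. -/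
/-- The skeleton of a frame `(W,R)`: the quotient by `~_R`. -/
def Skeleton (W : Type*) (R : W → W → Prop) := Quot (simR R)

/-- The skeleton order `[x] ≤ [y] ⟺ x R* y`. -/
def skelLe {W : Type*} (R : W → W → Prop) (a b : Skeleton W R) : Prop :=
  ∃ x y : W, Quot.mk (simR R) x = a ∧ Quot.mk (simR R) y = b ∧ Relation.ReflTransGen R x y

lemma simR_equiv {W : Type*} (R : W → W → Prop) : Equivalence (simR R) where
  refl x := ⟨.refl, .refl⟩
  symm h := ⟨h.2, h.1⟩
  trans h1 h2 := ⟨h1.1.trans h2.1, h2.2.trans h1.2⟩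

lemma eq_of_quot {W : Type*} {E : W → W → Prop} (hE : Equivalence E) {a b : W}
    (h : Quot.mk E a = Quot.mk E b) : E a b :=
  (hE.eqvGen_iff).mp (Quot.eq.mp h)

lemma fwd {W : Type*} (R E : W → W → Prop) {x y : W}
    (h : Relation.ReflTransGen R x y) :
    Relation.ReflTransGen (filtRel R E) (Quot.mk E x) (Quot.mk E y) := by
  induction h with
  | refl => exact .refl
  | tail _ hbc ih => exact ih.tail ⟨_, _, rfl, rfl, hbc⟩

lemma bwd {W : Type*} (R E : W → W → Prop) (hE : Equivalence E)
    (hsub : ∀ u v : W, E u v → simR R u v) {A B : Quot E}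
    (h : Relation.ReflTransGen (filtRel R E) A B) :
    ∀ x y : W, Quot.mk E x = A → Quot.mk E y = B → Relation.ReflTransGen R x y := by
  induction h with
  | refl =>
    intro x y hx hy
    exact (hsub x y (eq_of_quot hE (hx.trans hy.symm))).1
  | tail _ hbc ih =>
    intro x y hx hy
    obtain ⟨u, v, hu, hv, huv⟩ := hbc
    exact ((ih x u hx hu).tail huv).trans
      (hsub v y (eq_of_quot hE (hv.trans hy.symm))).1

theorem filtration_skeleton_iso {W : Type*} (R E : W → W → Prop)
    (hE : Equivalence E) (hsub : ∀ u v : W, E u v → simR R u v) :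
    ∃ f : Skeleton W R → Skeleton (Quot E) (filtRel R E),
      Function.Bijective f ∧
      (∀ x : W, f (Quot.mk (simR R) x) = Quot.mk (simR (filtRel R E)) (Quot.mk E x)) ∧
      (∀ a b : Skeleton W R, skelLe R a b ↔ skelLe (filtRel R E) (f a) (f b)) := by
  refine ⟨Quot.lift (fun x => Quot.mk _ (Quot.mk E x)) ?_, ⟨?_, ?_⟩, fun x => rfl, ?_⟩
  · intro a b hab
    exact Quot.sound ⟨fwd R E hab.1, fwd R E hab.2⟩
  · -- injective
    intro a b
    induction a using Quot.ind with | _ x =>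
    induction b using Quot.ind with | _ y =>
    intro h
    have := ((simR_equiv (filtRel R E)).eqvGen_iff).mp (Quot.eq.mp h)
    exact Quot.sound ⟨bwd R E hE hsub this.1 x y rfl rfl,
      bwd R E hE hsub this.2 y x rfl rfl⟩
  · -- surjective
    intro c
    induction c using Quot.ind with | _ U =>
    induction U using Quot.ind with | _ x =>
    exact ⟨Quot.mk _ x, rfl⟩
  · intro a b
    induction a using Quot.ind with | _ p =>
    induction b using Quot.ind with | _ q =>
    constructor
    · rintro ⟨x, y, hx, hy, hxy⟩
      have hxp := ((simR_equiv R).eqvGen_iff).mp (Quot.eq.mp hx)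
      have hyq := ((simR_equiv R).eqvGen_iff).mp (Quot.eq.mp hy)
      exact ⟨Quot.mk E x, Quot.mk E y,
        Quot.sound ⟨fwd R E hxp.1, fwd R E hxp.2⟩,
        Quot.sound ⟨fwd R E hyq.1, fwd R E hyq.2⟩, fwd R E hxy⟩
    · rintro ⟨U, V, hU, hV, hUV⟩
      induction U using Quot.ind with | _ u =>
      induction V using Quot.ind with | _ v =>
      have h1 := ((simR_equiv (filtRel R E)).eqvGen_iff).mp (Quot.eq.mp hU)
      have h2 := ((simR_equiv (filtRel R E)).eqvGen_iff).mp (Quot.eq.mp hV)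
      have hpu : Relation.ReflTransGen R p u := bwd R E hE hsub h1.2 p u rfl rfl
      have hvq : Relation.ReflTransGen R v q := bwd R E hE hsub h2.1 v q rfl rfl
      have huv : Relation.ReflTransGen R u v := bwd R E hE hsub hUV u v rfl rfl
      exact ⟨p, q, rfl, rfl, (hpu.trans huv).trans hvq⟩
end

section
/- Let F = (W,R) be an (m,n)-frame with n > m ≥ 1, and let ≈ be an equivalence contained in ~_R such that whenever u ≈ v there exists a path from u to v of length divisible by n−m. Then the minimal filtration F/≈ is an (m,n)-frame, i.e., (R/≈)^n ⊆ (R/≈)^m. -/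
theorem relPow_add {W : Type*} (R : W → W → Prop) (a b : ℕ) (x z : W) :
    relPow R (a + b) x z ↔ ∃ y, relPow R a x y ∧ relPow R b y z := by
  induction b generalizing z with
  | zero => simp [relPow]
  | succ b ih =>
    constructor
    · rintro ⟨y, h1, h2⟩
      obtain ⟨w, hw1, hw2⟩ := (ih y).mp h1
      exact ⟨w, hw1, y, hw2, h2⟩
    · rintro ⟨y, h1, w, h2, h3⟩
      exact ⟨w, (ih w).mpr ⟨y, h1, h2⟩, h3⟩

theorem relPow_lift {W : Type*} (R E : W → W → Prop) (k : ℕ) (u v : W)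
    (h : relPow R k u v) :
    relPow (filtRel R E) k (Quot.mk E u) (Quot.mk E v) := by
  induction k generalizing v with
  | zero => exact congrArg _ h
  | succ k ih =>
    obtain ⟨y, h1, h2⟩ := h
    exact ⟨Quot.mk E y, ih y h1, y, v, rfl, rfl, h2⟩

theorem mn_filtration {W : Type*} (R : W → W → Prop) (m n : ℕ)
    (hm : m ≥ 1) (hmn : n > m)
    -- `F` is an `(m,n)`-frame
    (hF : ∀ x y : W, relPow R n x y → relPow R m x y)
    (E : W → W → Prop) (hE : Equivalence E)
    (hsub : ∀ u v : W, E u v → simR R u v)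
    -- whenever `u ≈ v`, there is a path from `u` to `v` of length divisible by `n - m`
    (hpath : ∀ u v : W, E u v → ∃ l : ℕ, relPow R l u v ∧ (n - m) ∣ l) :
    -- the minimal filtration is an `(m,n)`-frame
    ∀ U V : Quot E, relPow (filtRel R E) n U V → relPow (filtRel R E) m U V := by
  intro U V hUV
  -- reduce any real path of length `n + k*(n-m)` to one of length `m`
  have key : ∀ k (x y : W), relPow R (n + k * (n - m)) x y → relPow R m x y := by
    intro k
    induction k with
    | zero => intro x y h; exact hF x y (by simpa using h)
    | succ k ih =>
      intro x y h
      have heq : n + (k + 1) * (n - m) = (n + k * (n - m)) + (n - m) := by ring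
      rw [heq] at h
      obtain ⟨z, h1, h2⟩ := (relPow_add R _ _ x y).mp h
      have h3 := ih x z h1
      have h4 : relPow R (m + (n - m)) x y := (relPow_add R m (n - m) x y).mpr ⟨z, h3, h2⟩
      have hn : m + (n - m) = n := by omega
      rw [hn] at h4
      exact hF x y h4
  -- extract a real path (with fill-ins) from a filtration path
  have extract : ∀ ℓ (U V : Quot E), ℓ ≥ 1 → relPow (filtRel R E) ℓ U V →
      ∃ u v d, Quot.mk E u = U ∧ Quot.mk E v = V ∧ (n - m) ∣ d ∧ relPow R (ℓ + d) u v := by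
    intro ℓ
    induction ℓ with
    | zero => intro U V h; omega
    | succ ℓ ih =>
      intro U V _ h
      obtain ⟨Y, h1, u', v', hu', hv', hR⟩ := h
      rcases Nat.eq_zero_or_pos ℓ with hl | hl
      · subst hl
        cases h1
        exact ⟨u', v', 0, hu', hv', dvd_zero _, u', rfl, hR⟩
      · obtain ⟨u, w, d, hu, hw, hd, hpw⟩ := ih U Y hl h1
        have hEwu : E w u' := by
          have hq : Quot.mk E w = Quot.mk E u' := by rw [hw, hu']
          exact (Equivalence.eqvGen_iff hE).mp (Quot.eqvGen_exact hq)
        obtain ⟨l, hpl, hdl⟩ := hpath w u' hEwu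
        refine ⟨u, v', d + l, hu, hv', dvd_add hd hdl, ?_⟩
        have hp' : relPow R ((ℓ + d) + l + 1) u v' :=
          ⟨u', (relPow_add R (ℓ + d) l u u').mpr ⟨w, hpw, hpl⟩, hR⟩
        have heq : ℓ + 1 + (d + l) = (ℓ + d) + l + 1 := by omega
        rwa [heq]
  obtain ⟨u, v, d, hu, hv, hd, hp⟩ := extract n U V (by omega) hUV
  obtain ⟨k, hk⟩ := hd
  have hp' : relPow R (n + k * (n - m)) u v := by rwa [hk, Nat.mul_comm] at hp
  have hm' := key k u v hp'
  have := relPow_lift R E m u v hm'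
  rwa [hu, hv] at this
end

section
/- Let F = (W,R) be a frame, 𝒜 a partition of W, ℬ a partition of the set 𝒜, and 𝒞 = { ⋃B : B ∈ ℬ }. Then 𝒞 is a partition of W and the frames (F_𝒜)_ℬ and F_𝒞 are isomorphic, where F_𝒳 denotes the minimal filtration by the partition 𝒳. -/
/-- `P` is a partition of the set `S`: its cells are nonempty, pairwise disjoint,
and their union is `S`. -/
def isPartitionOn {α : Type*} (S : Set α) (P : Set (Set α)) : Prop :=
  (∀ A ∈ P, A ≠ ∅) ∧ (∀ A ∈ P, ∀ B ∈ P, A ≠ B → Disjoint A B) ∧ ⋃₀ P = S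

/-- The minimal-filtration relation on cells: `U` relates to `V` iff some
element of `U` is `S`-related to some element of `V`. -/
def minFiltRel {α : Type*} (S : α → α → Prop) (U V : Set α) : Prop :=
  ∃ u ∈ U, ∃ v ∈ V, S u v

lemma part_eq_of_mem {α : Type*} {S : Set α} {P : Set (Set α)}
    (hP : isPartitionOn S P) {A B : Set α} (hA : A ∈ P) (hBm : B ∈ P)
    {x : α} (hxA : x ∈ A) (hxB : x ∈ B) : A = B := by
  by_contra h
  exact (hP.2.1 A hA B hBm h).le_bot ⟨hxA, hxB⟩

theorem filtration_compose {W : Type*} (R : W → W → Prop)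
    (𝒜 : Set (Set W)) (hA : isPartitionOn Set.univ 𝒜)
    (ℬ : Set (Set (Set W))) (hB : isPartitionOn 𝒜 ℬ) :
    letI 𝒞 : Set (Set W) := (fun b => ⋃₀ b) '' ℬ
    -- `𝒞` is a partition of `W`
    isPartitionOn Set.univ 𝒞 ∧
    -- and `(F_𝒜)_ℬ` is isomorphic to `F_𝒞` via `b ↦ ⋃₀ b`
    ∃ f : ℬ → 𝒞, Function.Bijective f ∧
      (∀ b : ℬ, (f b : Set W) = ⋃₀ (b : Set (Set W))) ∧
      (∀ b c : ℬ, minFiltRel (minFiltRel R) (b : Set (Set W)) (c : Set (Set W)) ↔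
        minFiltRel R (f b : Set W) (f c : Set W)) := by
  -- key: distinct members of ℬ have disjoint unions
  have key : ∀ b ∈ ℬ, ∀ c ∈ ℬ, ∀ x : W, x ∈ ⋃₀ b → x ∈ ⋃₀ c → b = c := by
    intro b hb c hc x ⟨A, hAb, hxA⟩ ⟨A', hA'c, hxA'⟩
    have hAmem : A ∈ 𝒜 := hB.2.2 ▸ Set.mem_sUnion.2 ⟨b, hb, hAb⟩
    have hA'mem : A' ∈ 𝒜 := hB.2.2 ▸ Set.mem_sUnion.2 ⟨c, hc, hA'c⟩
    have hAA' : A = A' := part_eq_of_mem hA hAmem hA'mem hxA hxA'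
    subst hAA'
    exact part_eq_of_mem hB hb hc hAb hA'c
  have hpart : isPartitionOn Set.univ ((fun b : Set (Set W) => ⋃₀ b) '' ℬ) := by
    refine ⟨?_, ?_, ?_⟩
    · rintro X ⟨b, hb, rfl⟩
      obtain ⟨A, hAb⟩ := Set.nonempty_iff_ne_empty.2 (hB.1 b hb)
      have hAmem : A ∈ 𝒜 := hB.2.2 ▸ Set.mem_sUnion.2 ⟨b, hb, hAb⟩
      obtain ⟨x, hx⟩ := Set.nonempty_iff_ne_empty.2 (hA.1 A hAmem)
      exact Set.nonempty_iff_ne_empty.1 ⟨x, A, hAb, hx⟩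
    · rintro X ⟨b, hb, rfl⟩ Y ⟨c, hc, rfl⟩ hXY
      rw [Set.disjoint_left]
      intro x hxb hxc
      exact hXY (by rw [key b hb c hc x hxb hxc])
    · apply Set.eq_univ_of_forall
      intro x
      have hx : x ∈ ⋃₀ 𝒜 := hA.2.2.symm ▸ Set.mem_univ x
      obtain ⟨A, hAmem, hxA⟩ := hx
      have : A ∈ ⋃₀ ℬ := hB.2.2.symm ▸ hAmem
      obtain ⟨b, hb, hAb⟩ := this
      exact Set.mem_sUnion.2 ⟨⋃₀ b, ⟨b, hb, rfl⟩, A, hAb, hxA⟩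
  refine ⟨hpart, fun b => ⟨⋃₀ (b : Set (Set W)), ⟨b, b.2, rfl⟩⟩, ⟨?_, ?_⟩, fun b => rfl, ?_⟩
  · intro b c h
    have h' : ⋃₀ (b : Set (Set W)) = ⋃₀ (c : Set (Set W)) := congrArg Subtype.val h
    obtain ⟨A, hAb⟩ := Set.nonempty_iff_ne_empty.2 (hB.1 b b.2)
    have hAmem : A ∈ 𝒜 := hB.2.2 ▸ Set.mem_sUnion.2 ⟨b, b.2, hAb⟩
    obtain ⟨x, hx⟩ := Set.nonempty_iff_ne_empty.2 (hA.1 A hAmem)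
    have hxb : x ∈ ⋃₀ (b : Set (Set W)) := ⟨A, hAb, hx⟩
    exact Subtype.ext (key b b.2 c c.2 x hxb (h' ▸ hxb))
  · rintro ⟨X, b, hb, rfl⟩
    exact ⟨⟨b, hb⟩, rfl⟩
  · intro b c
    constructor
    · rintro ⟨A, hAb, B, hBc, u, hu, v, hv, hR⟩
      exact ⟨u, ⟨A, hAb, hu⟩, v, ⟨B, hBc, hv⟩, hR⟩
    · rintro ⟨u, ⟨A, hAb, hu⟩, v, ⟨B, hBc, hv⟩, hR⟩
      exact ⟨A, hAb, B, hBc, u, hu, v, hv, hR⟩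
end
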